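/- For p,q ≥ 1 and even d ≥ 2, the number of vertices of A_{p,q} of degree d equals C(p−1,d/2−1)·C(q−1,d/2) + C(p−1,d/2)·C(q−1,d/2−1). -/

import Mathlib

/-- Two words are related if one is obtained from the other by replacing one
occurrence of the subword `ab` (`a` = `false`, `b` = `true`) with `ba`. -/
def ARel (u v : List Bool) : Prop :=
  ∃ x y : List Bool,
    (u = x ++ false :: true :: y ∧ v = x ++ true :: false :: y) ∨
    (u = x ++ true :: false :: y ∧ v = x ++ false :: true :: y)

/-- The graph `A_{p,q}` whose vertices are the words with `p` letters `a`
(= `false`) and `q` letters `b` (= `true`), two words being adjacent if one is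
obtained from the other by changing one subword `ab` into `ba`. -/
def AGraph (p q : ℕ) : SimpleGraph {w : List Bool // w.count false = p ∧ w.count true = q} where
  Adj u v := ARel u.1 v.1
  symm := by
    constructor
    rintro u v ⟨x, y, ⟨h1, h2⟩ | ⟨h1, h2⟩⟩
    · exact ⟨x, y, Or.inr ⟨h2, h1⟩⟩
    · exact ⟨x, y, Or.inl ⟨h2, h1⟩⟩
  loopless := by
    constructor
    rintro u ⟨x, y, ⟨h1, h2⟩ | ⟨h1, h2⟩⟩ <;>
    · rw [h1] at h2
      have := List.append_cancel_left h2
      simp at this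

def dgr : List Bool → ℕ
  | [] => 0
  | [_] => 0
  | a :: b :: l => (if a = b then 0 else 1) + dgr (b :: l)

lemma ARel_length {u v : List Bool} (h : ARel u v) : v.length = u.length := by
  obtain ⟨x, y, ⟨h1, h2⟩ | ⟨h1, h2⟩⟩ := h <;> subst h1 <;> subst h2 <;> simp

lemma ARel_count {u v : List Bool} (h : ARel u v) (c : Bool) : v.count c = u.count c := by
  obtain ⟨x, y, ⟨h1, h2⟩ | ⟨h1, h2⟩⟩ := h <;> subst h1 <;> subst h2 <;>
    simp [List.count_append, List.count_cons] <;> ring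

lemma ARel_cons_iff {c : Bool} {t v : List Bool} :
    ARel (c :: t) v ↔ (∃ v', ARel t v' ∧ v = c :: v') ∨
      (∃ y, t = (!c) :: y ∧ v = (!c) :: c :: y) := by
  constructor
  · rintro ⟨x, y, h⟩
    match x, h with
    | [], Or.inl ⟨h1, h2⟩ =>
      simp at h1
      obtain ⟨hc, ht⟩ := h1
      subst hc
      exact Or.inr ⟨y, by simpa using ht, by simpa using h2⟩
    | [], Or.inr ⟨h1, h2⟩ =>
      simp at h1
      obtain ⟨hc, ht⟩ := h1
      subst hc
      exact Or.inr ⟨y, by simpa using ht, by simpa using h2⟩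
    | e :: x', Or.inl ⟨h1, h2⟩ =>
      simp at h1
      obtain ⟨hc, ht⟩ := h1
      subst hc
      exact Or.inl ⟨x' ++ true :: false :: y, ⟨x', y, Or.inl ⟨ht, rfl⟩⟩, by simpa using h2⟩
    | e :: x', Or.inr ⟨h1, h2⟩ =>
      simp at h1
      obtain ⟨hc, ht⟩ := h1
      subst hc
      exact Or.inl ⟨x' ++ false :: true :: y, ⟨x', y, Or.inr ⟨ht, rfl⟩⟩, by simpa using h2⟩
  · rintro (⟨v', ⟨x, y, h⟩, rfl⟩ | ⟨y, ht, rfl⟩)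
    · rcases h with ⟨h1, h2⟩ | ⟨h1, h2⟩
      · exact ⟨c :: x, y, Or.inl ⟨by simp [h1], by simp [h2]⟩⟩
      · exact ⟨c :: x, y, Or.inr ⟨by simp [h1], by simp [h2]⟩⟩
    · cases c
      · exact ⟨[], y, Or.inl ⟨by simp [ht], by simp⟩⟩
      · exact ⟨[], y, Or.inr ⟨by simp [ht], by simp⟩⟩

lemma not_ARel_short {u v : List Bool} (h : u.length ≤ 1) : ¬ ARel u v := by
  rintro ⟨x, y, ⟨h1, _⟩ | ⟨h1, _⟩⟩ <;> subst h1 <;> simp at h <;> omega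

instance ARel_finite (w : List Bool) : Finite {v // ARel w v} :=
  Set.Finite.to_subtype
    ((List.finite_length_eq Bool w.length).subset (fun _ hv => ARel_length hv))

lemma nat_card_option (X : Type*) [Finite X] : Nat.card (Option X) = Nat.card X + 1 := by
  rw [Nat.card_congr (Equiv.optionEquivSumPUnit _), Nat.card_sum]
  have h1 : Nat.card PUnit.{1} = 1 := Nat.card_unique
  rw [h1]

lemma card_ARel : ∀ w : List Bool, Nat.card {v // ARel w v} = dgr w
  | [] => by
    have : IsEmpty {v // ARel ([] : List Bool) v} :=
      ⟨fun v => not_ARel_short (by simp) v.2⟩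
    simp [dgr]
  | [a] => by
    have : IsEmpty {v // ARel [a] v} :=
      ⟨fun v => not_ARel_short (by simp) v.2⟩
    simp [dgr]
  | a :: b :: l => by
    have hrec := card_ARel (b :: l)
    have hmem1 : ∀ v' : {v // ARel (b :: l) v}, ARel (a :: b :: l) (a :: v'.1) :=
      fun v' => ARel_cons_iff.2 (Or.inl ⟨v'.1, v'.2, rfl⟩)
    by_cases hab : b = !a
    · have hmem2 : ARel (a :: b :: l) (b :: a :: l) := by
        subst hab
        exact ARel_cons_iff.2 (Or.inr ⟨l, rfl, rfl⟩)
      have key := Nat.card_eq_of_bijective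
        (fun o : Option {v // ARel (b :: l) v} =>
          Option.elim o (⟨b :: a :: l, hmem2⟩ : {v // ARel (a :: b :: l) v})
            (fun v' => ⟨a :: v'.1, hmem1 v'⟩))
        ⟨by
          rintro (_ | ⟨v1, h1⟩) (_ | ⟨v2, h2⟩) h
          · rfl
          · exfalso; have hh := congrArg Subtype.val h; simp [hab] at hh
          · exfalso; have hh := congrArg Subtype.val h; simp [hab] at hh
          · have hh := congrArg Subtype.val h
            simp only [Option.elim, List.cons.injEq] at hh
            simp only [Option.some.injEq]
            exact Subtype.ext hh.2,
         by
          rintro ⟨v, hv⟩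
          rcases ARel_cons_iff.1 hv with ⟨v', hv', rfl⟩ | ⟨y, hy, rfl⟩
          · exact ⟨some ⟨v', hv'⟩, rfl⟩
          · have hy2 : y = l := by
              rw [hab] at hy
              injection hy with _ h
              exact h.symm
            subst hy2
            refine ⟨none, Subtype.ext ?_⟩
            simp [hab]⟩
      rw [nat_card_option] at key
      rw [← key, hrec]
      subst hab
      simp [dgr]
      omega
    · have hba : b = a := by
        cases a <;> cases b <;> simp_all
      subst hba
      have key := Nat.card_eq_of_bijective
        (fun v' : {v // ARel (b :: l) v} =>
          (⟨b :: v'.1, hmem1 v'⟩ : {v // ARel (b :: b :: l) v}))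
        ⟨by
          rintro ⟨v1, h1⟩ ⟨v2, h2⟩ h
          have hh := congrArg Subtype.val h
          simp only [List.cons.injEq] at hh
          exact Subtype.ext hh.2,
         by
          rintro ⟨v, hv⟩
          rcases ARel_cons_iff.1 hv with ⟨v', hv', rfl⟩ | ⟨y, hy, rfl⟩
          · exact ⟨⟨v', hv'⟩, rfl⟩
          · exfalso
            have := congrArg List.head? hy
            simp at this⟩
      rw [← key, hrec]
      simp [dgr]


def expandW : Bool → List ℕ → List Bool
  | _, [] => []
  | s, n :: L => List.replicate n s ++ expandW (!s) L

def evens : List ℕ → List ℕ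
  | [] => []
  | [a] => [a]
  | a :: _ :: l => a :: evens l

def odds (l : List ℕ) : List ℕ := evens l.tail

lemma evens_cons (a : ℕ) (l : List ℕ) : evens (a :: l) = a :: odds l := by
  cases l <;> rfl

lemma odds_cons (a : ℕ) (l : List ℕ) : odds (a :: l) = evens l := rfl

lemma count_expandW : ∀ (L : List ℕ) (s : Bool),
    (expandW s L).count s = (evens L).sum ∧ (expandW s L).count (!s) = (odds L).sum
  | [], s => by simp [expandW, evens, odds]
  | n :: M, s => by
    have IH := count_expandW M (!s)
    rw [Bool.not_not] at IH
    constructor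
    · rw [expandW, List.count_append, evens_cons, List.sum_cons, List.count_replicate, IH.2]
      simp
    · rw [expandW, List.count_append, odds_cons, List.count_replicate, IH.1]
      simp

lemma head?_expandW (s : Bool) (n : ℕ) (L : List ℕ) (hn : 0 < n) :
    (expandW s (n :: L)).head? = some s := by
  obtain ⟨k, rfl⟩ := Nat.exists_eq_add_of_lt hn
  simp [expandW, List.replicate_succ, Nat.add_comm]

lemma dgr_cons_cons (a b : Bool) (l : List Bool) :
    dgr (a :: b :: l) = (if a = b then 0 else 1) + dgr (b :: l) := rfl

lemma dgr_replicate_append (s : Bool) (t : List Bool) :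
    ∀ n, 0 < n → dgr (List.replicate n s ++ t) =
      (if t.head? = some (!s) then 1 else 0) + dgr t
  | 0, h => by omega
  | 1, _ => by
    cases t with
    | nil => simp [dgr]
    | cons b r =>
      simp only [List.replicate_one, List.singleton_append, dgr_cons_cons, List.head?_cons]
      congr 1
      cases s <;> cases b <;> simp
  | n + 2, _ => by
    have IH := dgr_replicate_append s t (n + 1) (by omega)
    have e1 : List.replicate (n+2) s ++ t = s :: s :: (List.replicate n s ++ t) := by
      simp [List.replicate_succ]
    have e2 : List.replicate (n+1) s ++ t = s :: (List.replicate n s ++ t) := by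
      simp [List.replicate_succ]
    rw [e1, dgr_cons_cons, if_pos rfl, Nat.zero_add, ← e2, IH]

lemma dgr_expandW : ∀ (L : List ℕ), (∀ x ∈ L, 0 < x) → ∀ s : Bool,
    dgr (expandW s L) = L.length - 1
  | [], _, s => by simp [expandW, dgr]
  | [n], h, s => by
    have hd := dgr_replicate_append s [] n (h n (by simp))
    rw [List.append_nil] at hd
    rw [expandW, expandW, List.append_nil, hd, List.head?_nil]
    simp [dgr]
  | n :: m :: M, h, s => by
    have IH := dgr_expandW (m :: M) (fun x hx => h x (by simp [hx] )) (!s)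
    rw [expandW, dgr_replicate_append s _ n (h n (by simp)),
      head?_expandW (!s) m M (h m (by simp)), IH]
    simp
    omega

lemma expandW_ne_nil {s : Bool} {L : List ℕ} (h : ∀ x ∈ L, 0 < x) (hL : L ≠ []) :
    expandW s L ≠ [] := by
  cases L with
  | nil => exact absurd rfl hL
  | cons n M =>
    rw [expandW]
    have := h n (by simp)
    simp [List.replicate, this]
    omega

lemma expandW_lt_aux {s : Bool} {n n' : ℕ} {M M' : List ℕ} (hlt : n < n')
    (hM : ∀ x ∈ M, 0 < x)
    (h : List.replicate n s ++ expandW (!s) M = List.replicate n' s ++ expandW (!s) M') :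
    False := by
  rw [show n' = n + (n' - n) by omega, List.replicate_add, List.append_assoc] at h
  have h2 := List.append_cancel_left h
  have hd := congrArg List.head? h2
  rw [List.head?_append_of_ne_nil] at hd
  · cases M with
    | nil =>
      rw [expandW, List.head?_nil] at hd
      rw [show n' - n = (n' - n - 1) + 1 by omega, List.replicate_succ] at hd
      simp at hd
    | cons m MM =>
      rw [head?_expandW (!s) m MM (hM m (by simp)),
        show n' - n = (n' - n - 1) + 1 by omega, List.replicate_succ] at hd
      simp at hd
  · simp
    omega

lemma expandW_inj : ∀ (L L' : List ℕ) (s : Bool), (∀ x ∈ L, 0 < x) → (∀ x ∈ L', 0 < x) →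
    expandW s L = expandW s L' → L = L'
  | [], [], _, _, _, _ => rfl
  | [], n' :: M', s, _, h', h => by
    exact absurd h.symm (expandW_ne_nil h' (by simp))
  | n :: M, [], s, h, _, heq => by
    exact absurd heq (expandW_ne_nil h (by simp))
  | n :: M, n' :: M', s, h, h', heq => by
    rw [expandW, expandW] at heq
    have hnn : n = n' := by
      rcases Nat.lt_trichotomy n n' with hlt | he | hgt
      · exact absurd (expandW_lt_aux hlt (fun x hx => h x (by simp [hx])) heq) not_false
      · exact he
      · exact absurd (expandW_lt_aux hgt (fun x hx => h' x (by simp [hx])) heq.symm) not_false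
    subst hnn
    have h2 := List.append_cancel_left heq
    rw [expandW_inj M M' (!s) (fun x hx => h x (by simp [hx]))
      (fun x hx => h' x (by simp [hx])) h2]

lemma expandW_surj : ∀ (n : ℕ) (w : List Bool), w.length ≤ n →
    ∃ s L, (∀ x ∈ L, 0 < x) ∧ expandW s L = w
  | _, [], _ => ⟨true, [], by simp, rfl⟩
  | 0, c :: t, h => by simp at h
  | n + 1, c :: t, h => by
    obtain ⟨tk, rest, htk, hrest⟩ :
        ∃ tk rest, (c :: t).takeWhile (· == c) = tk ∧ (c :: t).dropWhile (· == c) = rest :=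
      ⟨_, _, rfl, rfl⟩
    have hsplit : tk ++ rest = c :: t := by
      rw [← htk, ← hrest]; exact List.takeWhile_append_dropWhile
    have htw : tk = List.replicate tk.length c :=
      List.eq_replicate_iff.2 ⟨rfl, fun b hb => by
        rw [← htk] at hb
        have := List.mem_takeWhile_imp hb
        simpa using this⟩
    have hk1 : 1 ≤ tk.length := by
      rw [← htk, List.takeWhile_cons_of_pos (by simp)]
      simp
    have hlen : rest.length ≤ n := by
      have h2 := congrArg List.length hsplit
      simp only [List.length_append, List.length_cons] at h2 h
      omega
    obtain ⟨s', L', hpos', hexp⟩ := expandW_surj n rest hlen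
    cases L' with
    | nil =>
      refine ⟨c, [tk.length], by simp; omega, ?_⟩
      rw [expandW, expandW, List.append_nil, ← htw]
      rw [expandW] at hexp
      rw [← hexp] at hsplit
      simpa using hsplit
    | cons m MM =>
      have hh1 : rest.head? = some s' := by
        rw [← hexp]
        exact head?_expandW s' m MM (hpos' m (by simp))
      have hh2 : s' = !c := by
        have hw := List.head?_dropWhile_not (· == c) (c :: t)
        rw [hrest, hh1] at hw
        dsimp only at hw
        cases c <;> cases s' <;> revert hw <;> decide
      refine ⟨c, tk.length :: m :: MM, ?_, ?_⟩
      · intro x hx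
        rcases List.mem_cons.1 hx with rfl | hx2
        · omega
        · exact hpos' x hx2
      · rw [expandW, ← hh2, hexp, ← htw, hsplit]


def itl : List ℕ → List ℕ → List ℕ
  | [], B => B
  | a :: A, B => a :: itl B A
termination_by A B => A.length + B.length

lemma itl_nil (B : List ℕ) : itl [] B = B := by rw [itl]

lemma itl_cons (a : ℕ) (A B : List ℕ) : itl (a :: A) B = a :: itl B A := by rw [itl]

lemma evens_two (a b : ℕ) (l : List ℕ) : evens (a :: b :: l) = a :: evens l := rfl

lemma odds_two (a b : ℕ) (l : List ℕ) : odds (a :: b :: l) = b :: odds l := by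
  rw [odds_cons, evens_cons]

lemma itl_evens_odds : ∀ l : List ℕ, itl (evens l) (odds l) = l
  | [] => by rw [show evens [] = [] from rfl, show odds [] = [] from rfl, itl_nil]
  | [a] => by
    rw [show evens [a] = [a] from rfl, show odds [a] = [] from rfl, itl_cons, itl_nil]
  | a :: b :: l => by
    rw [evens_two, odds_two, itl_cons, itl_cons, itl_evens_odds l]

lemma evens_odds_itl : ∀ (A B : List ℕ), B.length ≤ A.length → A.length ≤ B.length + 1 →
    evens (itl A B) = A ∧ odds (itl A B) = B
  | [], B, h1, _ => by
    have hB : B.length = 0 := by simpa using h1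
    rw [List.length_eq_zero_iff] at hB
    subst hB
    rw [itl_nil]
    exact ⟨rfl, rfl⟩
  | a :: A, B, h1, h2 => by
    have IH := evens_odds_itl B A (by simpa using h2) (by simp at h1 ⊢; omega)
    rw [itl_cons, evens_cons, odds_cons, IH.1, IH.2]
    exact ⟨rfl, rfl⟩
termination_by A B => A.length + B.length

lemma mem_evens : ∀ (l : List ℕ) (x : ℕ), x ∈ evens l → x ∈ l
  | [], _, h => by rw [show evens [] = [] from rfl] at h; simp at h
  | [a], x, h => by rwa [show evens [a] = [a] from rfl] at h
  | a :: b :: l, x, h => by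
    rw [evens_two] at h
    rcases List.mem_cons.1 h with rfl | h2
    · simp
    · simp [mem_evens l x h2]

lemma mem_odds (l : List ℕ) (x : ℕ) (h : x ∈ odds l) : x ∈ l := by
  cases l with
  | nil =>
    rw [show odds [] = [] from rfl] at h
    simp at h
  | cons a t => exact List.mem_cons.2 (Or.inr (mem_evens t x h))

lemma mem_itl : ∀ (A B : List ℕ) (x : ℕ), x ∈ itl A B → x ∈ A ∨ x ∈ B
  | [], B, x, h => Or.inr (by rwa [itl_nil] at h)
  | a :: A, B, x, h => by
    rw [itl_cons] at h
    rcases List.mem_cons.1 h with rfl | h2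
    · exact Or.inl (by simp)
    · rcases mem_itl B A x h2 with hB | hA
      · exact Or.inr hB
      · exact Or.inl (by simp [hA])
termination_by A B => A.length + B.length

lemma length_evens : ∀ l : List ℕ, (evens l).length = (l.length + 1) / 2
  | [] => by rw [show evens [] = [] from rfl]; simp
  | [a] => by rw [show evens [a] = [a] from rfl]; simp
  | a :: b :: l => by
    rw [evens_two, List.length_cons, length_evens l]
    simp
    omega

lemma length_odds (l : List ℕ) : (odds l).length = l.length / 2 := by
  cases l with
  | nil => rfl
  | cons a t =>
    rw [odds_cons, length_evens]
    simp

lemma length_itl : ∀ A B : List ℕ, (itl A B).length = A.length + B.length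
  | [], B => by rw [itl_nil]; simp
  | a :: A, B => by
    rw [itl_cons, List.length_cons, length_itl B A, List.length_cons]
    omega
termination_by A B => A.length + B.length

lemma sum_evens_add_odds : ∀ l : List ℕ, (evens l).sum + (odds l).sum = l.sum
  | [] => rfl
  | [a] => by simp [evens, odds]
  | a :: b :: l => by
    rw [evens_two, odds_two, List.sum_cons, List.sum_cons,
      List.sum_cons, List.sum_cons]
    have := sum_evens_add_odds l
    omega

/-- Positive compositions of `n` with `k` parts. -/
abbrev CompT (n k : ℕ) : Type := {l : List ℕ // l.length = k ∧ (∀ x ∈ l, 0 < x) ∧ l.sum = n}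

instance CompT_finite (n k : ℕ) : Finite (CompT n k) := by
  apply Finite.of_injective (β := Composition n)
    (fun l => Composition.mk l.1 (fun hi => l.2.2.1 _ hi) l.2.2.2)
  intro l1 l2 h
  exact Subtype.ext (congrArg Composition.blocks h)

lemma headI_cons_tail {l : List ℕ} (h : l ≠ []) : l.headI :: l.tail = l := by
  cases l with
  | nil => exact absurd rfl h
  | cons a t => rfl

lemma card_CompT_zero_right (n : ℕ) (hn : 1 ≤ n) : Nat.card (CompT n 0) = 0 := by
  have : IsEmpty (CompT n 0) := ⟨fun l => by
    obtain ⟨l, h1, _, h3⟩ := l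
    rw [List.length_eq_zero_iff] at h1
    subst h1
    simp at h3
    omega⟩
  simp

lemma card_CompT_zero_left (k : ℕ) : Nat.card (CompT 0 (k + 1)) = 0 := by
  have : IsEmpty (CompT 0 (k + 1)) := ⟨fun l => by
    obtain ⟨l, h1, h2, h3⟩ := l
    cases l with
    | nil => simp at h1
    | cons a t =>
      rw [List.sum_cons] at h3
      have := h2 a (by simp)
      omega⟩
  simp

lemma card_CompT_one : Nat.card (CompT 0 0) = 1 := by
  have h1 : ∀ x : CompT 0 0, x = ⟨[], rfl, by simp, rfl⟩ := by
    rintro ⟨l, hl1, -, -⟩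
    rw [List.length_eq_zero_iff] at hl1
    subst hl1
    rfl
  have : Subsingleton (CompT 0 0) := ⟨fun a b => (h1 a).trans (h1 b).symm⟩
  have : Nonempty (CompT 0 0) := ⟨⟨[], rfl, by simp, rfl⟩⟩
  exact Nat.card_unique

lemma card_CompT_rec (n k : ℕ) :
    Nat.card (CompT (n + 1) (k + 1)) = Nat.card (CompT n k) + Nat.card (CompT n (k + 1)) := by
  have hmem1 : ∀ l : CompT n k, (1 :: l.1).length = k + 1 ∧
      (∀ x ∈ 1 :: l.1, 0 < x) ∧ (1 :: l.1).sum = n + 1 := by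
    rintro ⟨l, h1, h2, h3⟩
    refine ⟨by simp [h1], ?_, by simp [h3, Nat.add_comm]⟩
    intro x hx
    rcases List.mem_cons.1 hx with rfl | hx2
    · omega
    · exact h2 x hx2
  have hmem2 : ∀ l : CompT n (k + 1), ((l.1.headI + 1) :: l.1.tail).length = k + 1 ∧
      (∀ x ∈ (l.1.headI + 1) :: l.1.tail, 0 < x) ∧ ((l.1.headI + 1) :: l.1.tail).sum = n + 1 := by
    rintro ⟨l, h1, h2, h3⟩
    have hne : l ≠ [] := by
      intro hl; subst hl; simp at h1
    have hct := headI_cons_tail hne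
    constructor
    · have := congrArg List.length hct
      simp at this ⊢
      omega
    constructor
    · intro x hx
      rcases List.mem_cons.1 hx with rfl | hx2
      · omega
      · exact h2 x (by rw [← hct]; exact List.mem_cons.2 (Or.inr hx2))
    · have : l.headI + l.tail.sum = n := by
        rw [← h3, ← hct]; simp
      simp
      omega
  have key := Nat.card_eq_of_bijective
    (fun o : CompT n k ⊕ CompT n (k + 1) =>
      Sum.elim
        (fun l => (⟨1 :: l.1, hmem1 l⟩ : CompT (n + 1) (k + 1)))
        (fun l => (⟨(l.1.headI + 1) :: l.1.tail, hmem2 l⟩ : CompT (n + 1) (k + 1))) o)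
    ⟨by
      rintro (l1 | l1) (l2 | l2) h <;> have hh := congrArg Subtype.val h <;>
        simp only [Sum.elim_inl, Sum.elim_inr, List.cons.injEq] at hh
      · exact congrArg Sum.inl (Subtype.ext hh.2)
      · exfalso
        have hpos : 0 < l2.1.headI := l2.2.2.1 _ (by
          rw [← headI_cons_tail (show l2.1 ≠ [] by
            intro he; have := l2.2.1; rw [he] at this; simp at this)]
          simp)
        omega
      · exfalso
        have hpos : 0 < l1.1.headI := l1.2.2.1 _ (by
          rw [← headI_cons_tail (show l1.1 ≠ [] by
            intro he; have := l1.2.1; rw [he] at this; simp at this)]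
          simp)
        omega
      · refine congrArg Sum.inr (Subtype.ext ?_)
        have hne1 : l1.1 ≠ [] := by
          intro he; have := l1.2.1; rw [he] at this; simp at this
        have hne2 : l2.1 ≠ [] := by
          intro he; have := l2.2.1; rw [he] at this; simp at this
        rw [← headI_cons_tail hne1, ← headI_cons_tail hne2]
        rw [hh.2]
        congr 1
        omega,
     by
      rintro ⟨l, hl1, hl2, hl3⟩
      cases l with
      | nil => simp at hl1
      | cons a t =>
        have ha : 0 < a := hl2 a (by simp)
        rcases Nat.lt_or_ge a 2 with h2 | h2
        · have ha1 : a = 1 := by omega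
          subst ha1
          refine ⟨Sum.inl ⟨t, by simpa using hl1, fun x hx => hl2 x (by simp [hx]),
            by simp at hl3; omega⟩, ?_⟩
          exact Subtype.ext rfl
        · refine ⟨Sum.inr ⟨(a - 1) :: t, by simpa using hl1, ?_, ?_⟩, ?_⟩
          · intro x hx
            rcases List.mem_cons.1 hx with rfl | hx2
            · omega
            · exact hl2 x (by simp [hx2])
          · simp at hl3 ⊢
            omega
          · apply Subtype.ext
            simp only [Sum.elim_inr, List.headI_cons, List.tail_cons]
            congr 1
            omega⟩
  rw [← key, Nat.card_sum]

lemma card_CompT : ∀ n k : ℕ, Nat.card (CompT (n + 1) (k + 1)) = n.choose k := by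
  intro n
  induction n with
  | zero =>
    intro k
    rw [card_CompT_rec, card_CompT_zero_left]
    cases k with
    | zero => rw [card_CompT_one]; rfl
    | succ j => rw [card_CompT_zero_left]; simp
  | succ n IH =>
    intro k
    rw [card_CompT_rec]
    cases k with
    | zero =>
      rw [card_CompT_zero_right (n + 1) (by omega), IH 0]
      simp
    | succ j =>
      rw [IH j, IH (j + 1), Nat.choose_succ_succ]


lemma head?_expandW_ne_nil (s : Bool) {L : List ℕ} (hpos : ∀ x ∈ L, 0 < x) (hne : L ≠ []) :
    (expandW s L).head? = some s := by
  cases L with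
  | nil => exact absurd rfl hne
  | cons n M => exact head?_expandW s n M (hpos n (by simp))

/-- Words with given letter counts and odd block count `2*mm+1`. -/
abbrev UU (P Q mm : ℕ) : Type :=
  {L : List ℕ // (∀ x ∈ L, 0 < x) ∧ L.length = 2 * mm + 1 ∧
    (evens L).sum = P ∧ (odds L).sum = Q}

instance UU_finite (P Q mm : ℕ) : Finite (UU P Q mm) := by
  apply Finite.of_injective (β := Composition (P + Q))
    (fun L => Composition.mk L.1 (fun hi => L.2.1 _ hi)
      (by rw [← sum_evens_add_odds L.1, L.2.2.2.1, L.2.2.2.2]))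
  intro a b h
  exact Subtype.ext (congrArg Composition.blocks h)

lemma card_UU (P Q mm : ℕ) :
    Nat.card (UU P Q mm) = Nat.card (CompT P (mm + 1)) * Nat.card (CompT Q mm) := by
  rw [← Nat.card_prod]
  apply Nat.card_eq_of_bijective
    (fun L => ((⟨evens L.1, by rw [length_evens, L.2.2.1]; omega,
        fun x hx => L.2.1 x (mem_evens _ x hx), L.2.2.2.1⟩ : CompT P (mm + 1)),
      (⟨odds L.1, by rw [length_odds, L.2.2.1]; omega,
        fun x hx => L.2.1 x (mem_odds _ x hx), L.2.2.2.2⟩ : CompT Q mm)))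
  constructor
  · intro L1 L2 h
    have he := congrArg (fun z => z.1.1) h
    have ho := congrArg (fun z => z.2.1) h
    dsimp at he ho
    apply Subtype.ext
    rw [← itl_evens_odds L1.1, ← itl_evens_odds L2.1, he, ho]
  · rintro ⟨⟨A, hA1, hA2, hA3⟩, ⟨B, hB1, hB2, hB3⟩⟩
    have hio := evens_odds_itl A B (by omega) (by omega)
    refine ⟨⟨itl A B, ?_, ?_, ?_, ?_⟩, ?_⟩
    · intro x hx
      rcases mem_itl A B x hx with h | h
      · exact hA2 x h
      · exact hB2 x h
    · rw [length_itl, hA1, hB1]; omega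
    · rw [hio.1, hA3]
    · rw [hio.2, hB3]
    · refine Prod.ext (Subtype.ext ?_) (Subtype.ext ?_)
      · exact hio.1
      · exact hio.2

lemma card_W (p q mm : ℕ) (hp : 1 ≤ p) :
    Nat.card {w : List Bool // (w.count false = p ∧ w.count true = q) ∧ dgr w = 2 * mm} =
      Nat.card (UU p q mm) + Nat.card (UU q p mm) := by
  rw [← Nat.card_sum]
  apply (Nat.card_eq_of_bijective
    (fun o : UU p q mm ⊕ UU q p mm =>
      Sum.elim
        (fun L => (⟨expandW false L.1,
          ⟨⟨(count_expandW L.1 false).1.trans L.2.2.2.1, by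
            have h2 := (count_expandW L.1 false).2
            rw [Bool.not_false] at h2
            exact h2.trans L.2.2.2.2⟩, by
            rw [dgr_expandW L.1 L.2.1 false, L.2.2.1]; omega⟩⟩ :
          {w : List Bool // (w.count false = p ∧ w.count true = q) ∧ dgr w = 2 * mm}))
        (fun L => (⟨expandW true L.1,
          ⟨⟨by
            have h2 := (count_expandW L.1 true).2
            rw [Bool.not_true] at h2
            exact h2.trans L.2.2.2.2, (count_expandW L.1 true).1.trans L.2.2.2.1⟩, by
            rw [dgr_expandW L.1 L.2.1 true, L.2.2.1]; omega⟩⟩ :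
          {w : List Bool // (w.count false = p ∧ w.count true = q) ∧ dgr w = 2 * mm})) o)
    ⟨?_, ?_⟩).symm
  · rintro (L1 | L1) (L2 | L2) h <;> have hh := congrArg Subtype.val h <;>
      simp only [Sum.elim_inl, Sum.elim_inr] at hh
    · exact congrArg Sum.inl (Subtype.ext
        (expandW_inj L1.1 L2.1 false L1.2.1 L2.2.1 hh))
    · exfalso
      have h1 := head?_expandW_ne_nil false L1.2.1
        (by intro he; have := L1.2.2.1; rw [he] at this; simp at this)
      have h2 := head?_expandW_ne_nil true L2.2.1
        (by intro he; have := L2.2.2.1; rw [he] at this; simp at this)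
      rw [hh, h2] at h1
      simp at h1
    · exfalso
      have h1 := head?_expandW_ne_nil true L1.2.1
        (by intro he; have := L1.2.2.1; rw [he] at this; simp at this)
      have h2 := head?_expandW_ne_nil false L2.2.1
        (by intro he; have := L2.2.2.1; rw [he] at this; simp at this)
      rw [hh, h2] at h1
      simp at h1
    · exact congrArg Sum.inr (Subtype.ext
        (expandW_inj L1.1 L2.1 true L1.2.1 L2.2.1 hh))
  · rintro ⟨w, ⟨hcf, hct⟩, hdgr⟩
    obtain ⟨s, L, hpos, he⟩ := expandW_surj w.length w le_rfl
    have hLne : L ≠ [] := by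
      intro hL
      subst hL
      rw [expandW] at he
      rw [← he] at hcf
      simp at hcf
      omega
    have hlen : L.length = 2 * mm + 1 := by
      have h1 := dgr_expandW L hpos s
      rw [he, hdgr] at h1
      have h2 : 1 ≤ L.length := by
        cases L with
        | nil => exact absurd rfl hLne
        | cons a t => simp
      omega
    cases s
    · refine ⟨Sum.inl ⟨L, hpos, hlen, ?_, ?_⟩, Subtype.ext he⟩
      · rw [← (count_expandW L false).1, he, hcf]
      · have h2 := (count_expandW L false).2
        rw [Bool.not_false] at h2
        rw [← h2, he, hct]
    · refine ⟨Sum.inr ⟨L, hpos, hlen, ?_, ?_⟩, Subtype.ext he⟩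
      · rw [← (count_expandW L true).1, he, hct]
      · have h2 := (count_expandW L true).2
        rw [Bool.not_true] at h2
        rw [← h2, he, hcf]

lemma degree_eq (p q : ℕ) (v : {w : List Bool // w.count false = p ∧ w.count true = q}) :
    Nat.card ((AGraph p q).neighborSet v) = dgr v.1 := by
  rw [← card_ARel v.1]
  apply Nat.card_congr
  exact {
    toFun := fun u => ⟨u.1.1, u.2⟩
    invFun := fun u => ⟨⟨u.1, by rw [ARel_count u.2 false]; exact v.2.1,
      by rw [ARel_count u.2 true]; exact v.2.2⟩, u.2⟩
    left_inv := fun u => Subtype.ext (Subtype.ext rfl)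
    right_inv := fun u => Subtype.ext rfl }


/-- For `p, q ≥ 1` and even `d ≥ 2`, the number of vertices of `A_{p,q}` of
degree `d` equals `C(p-1, d/2-1) * C(q-1, d/2) + C(p-1, d/2) * C(q-1, d/2-1)`. -/
theorem AGraph_degree_count_even (p q d : ℕ) (hp : 1 ≤ p) (hq : 1 ≤ q)
    (hd : Even d) (hd2 : 2 ≤ d) :
    Nat.card {v : {w : List Bool // w.count false = p ∧ w.count true = q} //
        Nat.card ((AGraph p q).neighborSet v) = d} =
      (p - 1).choose (d / 2 - 1) * (q - 1).choose (d / 2) +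
        (p - 1).choose (d / 2) * (q - 1).choose (d / 2 - 1) := by
  obtain ⟨mm, hmm⟩ : ∃ mm, d = 2 * mm := by
    obtain ⟨r, hr⟩ := hd
    exact ⟨r, by omega⟩
  have hm1 : 1 ≤ mm := by omega
  have hdiv : d / 2 = mm := by omega
  have e1 : {v : {w : List Bool // w.count false = p ∧ w.count true = q} //
      Nat.card ((AGraph p q).neighborSet v) = d} ≃
      {w : List Bool // (w.count false = p ∧ w.count true = q) ∧ dgr w = d} :=
    (Equiv.subtypeEquivRight (fun v => by rw [degree_eq p q v])).trans
      (Equiv.subtypeSubtypeEquivSubtypeInter _ _)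
  rw [Nat.card_congr e1, hmm, card_W p q mm hp, card_UU, card_UU]
  obtain ⟨p', rfl⟩ : ∃ p', p = p' + 1 := ⟨p - 1, by omega⟩
  obtain ⟨q', rfl⟩ : ∃ q', q = q' + 1 := ⟨q - 1, by omega⟩
  obtain ⟨m', rfl⟩ : ∃ m', mm = m' + 1 := ⟨mm - 1, by omega⟩
  rw [card_CompT p' (m' + 1), card_CompT q' m', card_CompT q' (m' + 1), card_CompT p' m']
  have h2 : 2 * (m' + 1) / 2 = m' + 1 := by omega
  rw [h2]
  simp only [Nat.add_sub_cancel]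
  ring
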